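/- arXiv:2102.12247 — 3 statements merged into one kernel-verified Lean document; each statement's English description precedes it below -/
import Mathlib

section
/- A strict mixture of an informative distribution with an uninformative distribution is informative: if D0 is uninformative and D is a joint distribution over choices and predictions that is not uninformative, then for any α with 0 < α < 1, the mixture αD0 + (1−α)D is not uninformative. -/
open Finset

/-- A joint distribution over choices and predictions is uninformative if its
marginal on choices is uniform and choice and prediction are independent. -/
def Uninformative {C P : Type*} [Fintype C] [Fintype P] (D : C → P → ℝ) : Prop :=
  (∀ c : C, ∑ p : P, D c p = 1 / (Fintype.card C : ℝ)) ∧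
  (∀ (c : C) (p : P), D c p = (∑ p' : P, D c p') * (∑ c' : C, D c' p))

/-- A strict mixture of an informative distribution with an uninformative
distribution is informative. -/
theorem strict_mixture_with_informative_is_informative
    {C P : Type*} [Fintype C] [Fintype P]
    (D0 D : C → P → ℝ)
    (h0nn : ∀ c p, 0 ≤ D0 c p) (h0sum : ∑ c : C, ∑ p : P, D0 c p = 1)
    (hnn : ∀ c p, 0 ≤ D c p) (hsum : ∑ c : C, ∑ p : P, D c p = 1)
    (h0 : Uninformative D0) (hD : ¬ Uninformative D)
    (α : ℝ) (hα0 : 0 < α) (hα1 : α < 1) :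
    ¬ Uninformative (fun c p => α * D0 c p + (1 - α) * D c p) := by
  intro hM
  apply hD
  obtain ⟨hM1, hM2⟩ := hM
  obtain ⟨h01, h02⟩ := h0
  have h1α : (1:ℝ) - α ≠ 0 := by linarith
  have hmarg : ∀ c : C, ∑ p : P, D c p = 1 / (Fintype.card C : ℝ) := by
    intro c
    have h := hM1 c
    simp only [Finset.sum_add_distrib, ← Finset.mul_sum, h01 c] at h
    have hS : (1 - α) * ∑ p : P, D c p = (1 - α) * (1 / (Fintype.card C : ℝ)) := by
      linear_combination h
    exact mul_left_cancel₀ h1α hS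
  refine ⟨hmarg, fun c p => ?_⟩
  have hm := hM2 c p
  simp only [Finset.sum_add_distrib, ← Finset.mul_sum] at hm
  rw [h01 c, hmarg c] at hm
  have hd0 : D0 c p = (1 / (Fintype.card C : ℝ)) * ∑ c' : C, D0 c' p := by
    rw [h02 c p, h01 c]
  have key : (1 - α) * D c p
      = (1 - α) * ((1 / (Fintype.card C : ℝ)) * ∑ c' : C, D c' p) := by
    linear_combination hm - α * hd0
  have := mul_left_cancel₀ h1α key
  rw [hmarg c]
  exact this
end

section
/- Monotonicity of f-variety under mixing with uninformative distributions: for any joint distribution D on C × P with strictly positive probabilities, any uninformative distribution D0 on C × P with strictly positive probabilities, and any 0 < α < 1, V^f((1−α)D + αD0) ≤ (1−α)·V^f(D). -/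
open Finset

/-! The perspective `(a, b) ↦ a f(b / a)` of a convex `f` is jointly convex, and the f-variety is
a sum of perspectives evaluated at `(D c p, P_D(p) / |C|)`. Mixing with `U ⊗ P0` mixes each argument
pair with the diagonal point `(P0 p / |C|, P0 p / |C|)`, where the perspective vanishes because
`f 1 = 0`; joint convexity then gives the bound term by term. -/

/-- The f-variety of a joint distribution `D` on `C × P`: the f-divergence between `D`
and its uninformative counterpart `U ⊗ P_D`. -/
noncomputable def fVariety {C P : Type*} [Fintype C] [Fintype P]
    (f : ℝ → ℝ) (D : C → P → ℝ) : ℝ :=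
  ∑ c : C, ∑ p : P,
    D c p * f ((1 / (Fintype.card C : ℝ)) * (∑ c' : C, D c' p) / D c p)

noncomputable def perspective (f : ℝ → ℝ) (a b : ℝ) : ℝ := a * f (b / a)

theorem perspective_self (f : ℝ → ℝ) (hf1 : f 1 = 0) {a : ℝ} (ha : a ≠ 0) :
    perspective f a a = 0 := by
  simp [perspective, div_self ha, hf1]

theorem ConvexOn.perspective {f : ℝ → ℝ} (hf : ConvexOn ℝ (Set.Ici 0) f) :
    ConvexOn ℝ (Set.Ioi 0 ×ˢ Set.Ici 0) fun x : ℝ × ℝ => perspective f x.1 x.2 := by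
  refine ⟨(convex_Ioi 0).prod (convex_Ici 0), ?_⟩
  rintro ⟨a, b⟩ ⟨ha, hb⟩ ⟨a', b'⟩ ⟨ha', hb'⟩ μ ν hμ hν hμν
  simp only [Set.mem_Ioi, Set.mem_Ici] at ha hb ha' hb'
  simp only [Prod.smul_mk, Prod.mk_add_mk, smul_eq_mul]
  have hs : 0 < μ * a + ν * a' := by
    obtain rfl | hμ := hμ.eq_or_lt
    · rw [zero_add] at hμν
      simpa [hμν] using ha'
    · positivity
  set s := μ * a + ν * a'
  have hpoint : (μ * a / s) • (b / a) + (ν * a' / s) • (b' / a') = (μ * b + ν * b') / s := by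
    simp only [smul_eq_mul]
    field_simp
  have key := hf.2 (Set.mem_Ici.mpr (div_nonneg hb ha.le)) (Set.mem_Ici.mpr (div_nonneg hb' ha'.le))
    (by positivity : 0 ≤ μ * a / s) (by positivity : 0 ≤ ν * a' / s)
    (by rw [← add_div, div_self hs.ne'])
  rw [hpoint] at key
  calc s * f ((μ * b + ν * b') / s)
      ≤ s * ((μ * a / s) • f (b / a) + (ν * a' / s) • f (b' / a')) :=
        mul_le_mul_of_nonneg_left key hs.le
    _ = μ * (a * f (b / a)) + ν * (a' * f (b' / a')) := by
      simp only [smul_eq_mul]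
      field_simp

theorem fVariety_eq_sum_perspective {C P : Type*} [Fintype C] [Fintype P] (f : ℝ → ℝ)
    (D : C → P → ℝ) :
    fVariety f D = ∑ c, ∑ p, perspective f (D c p) (1 / (Fintype.card C : ℝ) * ∑ c', D c' p) :=
  rfl

theorem uniform_marginal_mix {C : Type*} [Fintype C] [Nonempty C] (d : C → ℝ) (q α : ℝ) :
    1 / (Fintype.card C : ℝ) * ∑ c, ((1 - α) * d c + α * (1 / (Fintype.card C : ℝ) * q)) =
      (1 - α) * (1 / (Fintype.card C : ℝ) * ∑ c, d c) + α * (1 / (Fintype.card C : ℝ) * q) := by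
  have hn : (Fintype.card C : ℝ) ≠ 0 := Nat.cast_ne_zero.mpr Fintype.card_ne_zero
  rw [sum_add_distrib, sum_const, ← mul_sum, card_univ, nsmul_eq_mul]
  field_simp

theorem fVariety_monotone_under_mixing_general
    {C P : Type*} [Fintype C] [Fintype P]
    (f : ℝ → ℝ) (hf : ConvexOn ℝ (Set.Ici (0 : ℝ)) f) (hf1 : f 1 = 0)
    (D : C → P → ℝ)
    (hpos : ∀ c p, 0 < D c p)
    (P0 : P → ℝ) (hP0 : ∀ p, 0 < P0 p)
    (α : ℝ) (hα0 : 0 < α) (hα1 : α < 1) :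
    fVariety f
        (fun c p => (1 - α) * D c p + α * ((1 / (Fintype.card C : ℝ)) * P0 p)) ≤
      (1 - α) * fVariety f D := by
  rw [fVariety_eq_sum_perspective, fVariety_eq_sum_perspective, mul_sum]
  refine sum_le_sum fun c _ => ?_
  rw [mul_sum]
  refine sum_le_sum fun p _ => ?_
  have : Nonempty C := ⟨c⟩
  rw [uniform_marginal_mix]
  set a₀ := 1 / (Fintype.card C : ℝ) * P0 p
  set b := 1 / (Fintype.card C : ℝ) * ∑ c', D c' p
  have ha₀ : 0 < a₀ := mul_pos (by simp [Fintype.card_pos]) (hP0 p)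
  have hb : 0 ≤ b := mul_nonneg (by positivity) (sum_nonneg fun c' _ => (hpos c' p).le)
  have hmix := hf.perspective.2 (show (D c p, b) ∈ _ from ⟨hpos c p, hb⟩)
    (show (a₀, a₀) ∈ _ from ⟨ha₀, ha₀.le⟩) (sub_nonneg.2 hα1.le) hα0.le (by ring)
  simpa only [Prod.smul_mk, Prod.mk_add_mk, smul_eq_mul, perspective_self f hf1 ha₀.ne',
    mul_zero, add_zero] using hmix

/-- Monotonicity of the f-variety under mixing with an uninformative distribution
`D0 = U ⊗ P0`. -/
theorem fVariety_monotone_under_mixing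
    {C P : Type*} [Fintype C] [Fintype P] [Nonempty C] [Nonempty P]
    (f : ℝ → ℝ) (hf : ConvexOn ℝ (Set.Ici (0 : ℝ)) f) (hf1 : f 1 = 0)
    (D : C → P → ℝ)
    (hpos : ∀ c p, 0 < D c p) (hsum : ∑ c : C, ∑ p : P, D c p = 1)
    (P0 : P → ℝ) (hP0 : ∀ p, 0 < P0 p) (hP0sum : ∑ p : P, P0 p = 1)
    (α : ℝ) (hα0 : 0 < α) (hα1 : α < 1) :
    fVariety f
        (fun c p => (1 - α) * D c p + α * ((1 / (Fintype.card C : ℝ)) * P0 p)) ≤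
      (1 - α) * fVariety f D :=
  fVariety_monotone_under_mixing_general f hf hf1 D hpos P0 hP0 α hα0 hα1
end

section
/- Tvd-variety is bounded above by 1 − 1/|C|: for any joint distribution D on a finite set C × P, V^{tvd}(D) ≤ 1 − 1/|C|. -/
/-!
The total variation distance between `D` and `Q c p = P_D(p) / |C|` is `1 - ∑ min (D, Q)`,
one minus the overlap of the two distributions. In each column `p` some `c` has `D c p` at least
the column mean `Q c p`, so the overlap in that column is at least `P_D(p) / |C|`; summed over `p`
the overlap is at least `1 / |C|`.
-/

open Finset

/-- The Tvd-variety of a joint distribution `D` on `C × P`. -/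
noncomputable def tvdVariety {C P : Type*} [Fintype C] [Fintype P]
    (D : C → P → ℝ) : ℝ :=
  (1 / 2) * ∑ c : C, ∑ p : P,
    |D c p - (1 / (Fintype.card C : ℝ)) * ∑ c' : C, D c' p|

lemma abs_sub_eq_add_sub_two_mul_min (a b : ℝ) : |a - b| = a + b - 2 * min a b := by
  linarith [max_sub_min_eq_abs' a b, min_add_max a b]

lemma sum_const_one_div_card_mul {ι : Type*} [Fintype ι] [Nonempty ι] (a : ℝ) :
    ∑ _i : ι, 1 / (Fintype.card ι : ℝ) * a = a := by
  rw [sum_const, card_univ, nsmul_eq_mul, ← mul_assoc, mul_one_div_cancel (by positivity), one_mul]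

lemma mean_le_sum_min_mean {ι : Type*} [Fintype ι] [Nonempty ι] (f : ι → ℝ)
    (hf : ∀ i, 0 ≤ f i) :
    1 / (Fintype.card ι : ℝ) * ∑ j, f j ≤
      ∑ i, min (f i) (1 / (Fintype.card ι : ℝ) * ∑ j, f j) := by
  set m := 1 / (Fintype.card ι : ℝ) * ∑ j, f j
  have hm : 0 ≤ m := by have := sum_nonneg fun j (_ : j ∈ univ) => hf j; positivity
  obtain ⟨i₀, -, hi₀⟩ : ∃ i ∈ univ, m ≤ f i :=
    exists_le_of_sum_le univ_nonempty (by rw [sum_const_one_div_card_mul])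
  calc m = min (f i₀) m := (min_eq_right hi₀).symm
    _ ≤ ∑ i, min (f i) m :=
      single_le_sum (fun i _ => le_min (hf i) hm) (mem_univ i₀)

theorem tvdVariety_le_general
    {C P : Type*} [Fintype C] [Fintype P] [Nonempty C]
    (D : C → P → ℝ)
    (hnn : ∀ c p, 0 ≤ D c p) (hsum : ∑ c : C, ∑ p : P, D c p = 1) :
    tvdVariety D ≤ 1 - 1 / (Fintype.card C : ℝ) := by
  set Q : C → P → ℝ := fun _ p => 1 / (Fintype.card C : ℝ) * ∑ c', D c' p
  have hQ : ∑ c, ∑ p, Q c p = 1 := by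
    calc ∑ c, ∑ p, Q c p = ∑ p, ∑ c, D c p := by
          rw [sum_comm]; exact sum_congr rfl fun p _ => sum_const_one_div_card_mul _
      _ = 1 := by rw [sum_comm, hsum]
  have hoverlap : 1 / (Fintype.card C : ℝ) ≤ ∑ c, ∑ p, min (D c p) (Q c p) := by
    calc 1 / (Fintype.card C : ℝ) = ∑ p, 1 / (Fintype.card C : ℝ) * ∑ c, D c p := by
          rw [← mul_sum, sum_comm, hsum, mul_one]
      _ ≤ ∑ p, ∑ c, min (D c p) (Q c p) :=
          sum_le_sum fun p _ => mean_le_sum_min_mean (D · p) (hnn · p)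
      _ = ∑ c, ∑ p, min (D c p) (Q c p) := sum_comm
  have htv : ∑ c, ∑ p, |D c p - Q c p| = 2 - 2 * ∑ c, ∑ p, min (D c p) (Q c p) := by
    simp only [abs_sub_eq_add_sub_two_mul_min, sum_sub_distrib, sum_add_distrib, ← mul_sum,
      hsum, hQ]
    ring
  rw [tvdVariety, htv]
  linarith

/-- The Tvd-variety is bounded above by `1 − 1/|C|`. -/
theorem tvdVariety_le
    {C P : Type*} [Fintype C] [Fintype P] [Nonempty C] [Nonempty P]
    (D : C → P → ℝ)
    (hnn : ∀ c p, 0 ≤ D c p) (hsum : ∑ c : C, ∑ p : P, D c p = 1) :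
    tvdVariety D ≤ 1 - 1 / (Fintype.card C : ℝ) :=
  tvdVariety_le_general D hnn hsum
end
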